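/- arXiv:2304.10613 — 3 statements merged into one kernel-verified Lean document; each statement's English description precedes it below -/
import Mathlib

section
/- Let q : ℝ → ℝ be four times continuously differentiable with a_3 := sup |q'''| < ∞ and a_4 := sup |q''''| < ∞. Let D be a distribution on ℝ with mean h and central moments σ_l = |E[(δ − h)^l]| < ∞ for l = 2, 3, 4, let δ̄_1, δ̄_2 be independent, each distributed as the average of m i.i.d. samples from D, and define the second-order extrapolation L^{(2)}_{D_m} q(s) = 2 q(s + (δ̄_1 + δ̄_2)/2) − (q(s + δ̄_1) + q(s + δ̄_2))/2. Then for every s ∈ ℝ, |E[L^{(2)}_{D_m} q(s)] − q(s + h)| ≤ (4 a_3 σ_3 + 9 a_4 σ_2^2)/(48 m^2) + (5 a_4 / 96) · (σ_4 − 3 σ_2^2)/m^3, where σ_4 = E[(δ − h)^4]. -/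
open MeasureTheory ProbabilityTheory Finset
open scoped Nat

/-! Taylor's formula with Lagrange remainder, integrated against the law of the mean `W` of `N`
centred i.i.d. samples, gives `E f(x₀ + W) = f x₀ + f''(x₀) κ₂ / (2N) + f'''(x₀) κ₃ / (6N²)`
up to `sup |f⁗| · E W⁴ / 24`, where `E W⁴ = (κ₄ + 3 (N - 1) κ₂²) / N³` and `κₖ` are the central
moments of one sample. The pooled average `(δ̄₁ + δ̄₂) / 2` is such a mean with `2N` samples, so in
`2 E f(x₀ + T) - (E f(x₀ + W₀) + E f(x₀ + W₁)) / 2` the variance terms cancel exactly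
(`2 / (4N) = 1 / (2N)`); what survives is `-f'''(x₀) κ₃ / (12 N²)` plus the fourth-order
remainders. -/

theorem abs_sub_sum_iteratedDeriv_le {f : ℝ → ℝ} {n : ℕ} (hf : ContDiff ℝ (n + 1) f) {C : ℝ}
    (hC : ∀ x, |iteratedDeriv (n + 1) f x| ≤ C) (x₀ t : ℝ) :
    |f (x₀ + t) - ∑ k ∈ range (n + 1), iteratedDeriv k f x₀ * t ^ k / k !|
      ≤ C * |t| ^ (n + 1) / (n + 1)! := by
  rcases eq_or_ne t 0 with rfl | ht
  · simp [sum_range_succ']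
  have hx : x₀ ≠ x₀ + t := by simpa using ht
  obtain ⟨x', -, hx'⟩ := taylor_mean_remainder_lagrange_iteratedDeriv hx hf.contDiffOn
  have htaylor : taylorWithinEval f n (Set.uIcc x₀ (x₀ + t)) x₀ (x₀ + t)
      = ∑ k ∈ range (n + 1), iteratedDeriv k f x₀ * t ^ k / k ! := by
    rw [taylor_within_apply]
    refine sum_congr rfl fun k hk => ?_
    rw [iteratedDerivWithin_eq_iteratedDeriv (uniqueDiffOn_uIcc hx)
      (hf.contDiffAt.of_le (by exact_mod_cast (mem_range.1 hk).le)) Set.left_mem_uIcc]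
    simp only [add_sub_cancel_left, smul_eq_mul]
    ring
  rw [← htaylor, hx', add_sub_cancel_left, abs_div, abs_mul, abs_pow,
    abs_of_pos (by positivity : (0 : ℝ) < (n + 1)!)]
  gcongr
  exact hC x'

section

variable {Ω : Type*} [MeasurableSpace Ω] {μ : Measure Ω}

theorem MeasureTheory.MemLp.integrable_pow_of_le [IsFiniteMeasure μ] {X : Ω → ℝ} {p k : ℕ}
    (hX : MemLp X p μ) (hk : k ≤ p) : Integrable (fun ω => X ω ^ k) μ := by
  refine (hX.mono_exponent (by exact_mod_cast hk)).integrable_norm_pow'.mono'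
    (hX.aestronglyMeasurable.pow k) (ae_of_all _ fun ω => ?_)
  simp

section Taylor

variable [IsProbabilityMeasure μ] {f : ℝ → ℝ} {n : ℕ} {C : ℝ} {W : Ω → ℝ}

theorem integrable_comp_add_of_iteratedDeriv_le (hf : ContDiff ℝ (n + 1) f)
    (hC : ∀ x, |iteratedDeriv (n + 1) f x| ≤ C) (x₀ : ℝ) (hW : MemLp W (n + 1 : ℕ) μ) :
    Integrable (fun ω => f (x₀ + W ω)) μ := by
  have hpoly : Integrable (fun ω => ∑ k ∈ range (n + 1), iteratedDeriv k f x₀ * W ω ^ k / k !) μ :=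
    integrable_finsetSum _ fun k hk =>
      ((hW.integrable_pow_of_le (mem_range.1 hk).le).const_mul _).div_const _
  have hrem : Integrable (fun ω => C * |W ω| ^ (n + 1) / (n + 1)!) μ :=
    ((hW.integrable_norm_pow').const_mul C).div_const _
  refine (hpoly.abs.add hrem).mono'
    (hf.continuous.comp_aestronglyMeasurable (hW.aestronglyMeasurable.const_add x₀))
    (ae_of_all _ fun ω => ?_)
  have hR := abs_sub_sum_iteratedDeriv_le hf hC x₀ (W ω)
  rw [Real.norm_eq_abs]
  simp only [Pi.add_apply]
  linarith [abs_sub_abs_le_abs_sub (f (x₀ + W ω))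
    (∑ k ∈ range (n + 1), iteratedDeriv k f x₀ * W ω ^ k / k !)]

theorem abs_integral_comp_add_sub_sum_le (hf : ContDiff ℝ (n + 1) f)
    (hC : ∀ x, |iteratedDeriv (n + 1) f x| ≤ C) (x₀ : ℝ) (hW : MemLp W (n + 1 : ℕ) μ) :
    |∫ ω, f (x₀ + W ω) ∂μ - ∑ k ∈ range (n + 1), iteratedDeriv k f x₀ * (∫ ω, W ω ^ k ∂μ) / k !|
      ≤ C * (∫ ω, |W ω| ^ (n + 1) ∂μ) / (n + 1)! := by
  have hpow : ∀ k ∈ range (n + 1), Integrable (fun ω => iteratedDeriv k f x₀ * W ω ^ k / k !) μ :=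
    fun k hk => ((hW.integrable_pow_of_le (mem_range.1 hk).le).const_mul _).div_const _
  have hsum : ∑ k ∈ range (n + 1), iteratedDeriv k f x₀ * (∫ ω, W ω ^ k ∂μ) / k !
      = ∫ ω, ∑ k ∈ range (n + 1), iteratedDeriv k f x₀ * W ω ^ k / (k ! : ℝ) ∂μ := by
    rw [integral_finsetSum _ hpow]
    simp only [integral_div, integral_const_mul]
  rw [hsum, ← integral_sub (integrable_comp_add_of_iteratedDeriv_le hf hC x₀ hW)
    (integrable_finsetSum _ hpow), ← integral_const_mul, ← integral_div]
  refine abs_integral_le_integral_abs.trans <| integral_mono_of_nonneg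
    (ae_of_all _ fun _ => abs_nonneg _) ((hW.integrable_norm_pow'.const_mul C).div_const _)
    (ae_of_all _ fun ω => abs_sub_sum_iteratedDeriv_le hf hC x₀ (W ω))

end Taylor

theorem ProbabilityTheory.IndepFun.integral_add_pow [IsFiniteMeasure μ] {X Y : Ω → ℝ} {n : ℕ}
    (hXY : X ⟂ᵢ[μ] Y) (hX : MemLp X n μ) (hY : MemLp Y n μ) :
    ∫ ω, (X ω + Y ω) ^ n ∂μ
      = ∑ k ∈ range (n + 1), (∫ ω, X ω ^ k ∂μ) * (∫ ω, Y ω ^ (n - k) ∂μ) * n.choose k := by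
  have hpow : ∀ k ∈ range (n + 1), (fun ω => X ω ^ k) ⟂ᵢ[μ] (fun ω => Y ω ^ (n - k)) :=
    fun k _ => hXY.comp (measurable_id.pow_const k) (measurable_id.pow_const (n - k))
  have hint : ∀ k ∈ range (n + 1),
      Integrable (fun ω => X ω ^ k * Y ω ^ (n - k) * (n.choose k : ℝ)) μ := fun k hk =>
    ((hpow k hk).integrable_mul (hX.integrable_pow_of_le (mem_range_succ_iff.1 hk))
      (hY.integrable_pow_of_le (n.sub_le k))).mul_const _
  simp_rw [add_pow]
  rw [integral_finsetSum _ hint]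
  refine sum_congr rfl fun k hk => ?_
  rw [integral_mul_const, (hpow k hk).integral_fun_mul_eq_mul_integral
    (hX.aestronglyMeasurable.pow k) (hY.aestronglyMeasurable.pow (n - k))]

theorem integral_sum_pow_eq_of_iIndepFun [IsProbabilityMeasure μ] {ι : Type*} {Z : ι → Ω → ℝ}
    {Z₀ : Ω → ℝ} (hmeas : ∀ i, Measurable (Z i)) (hindep : iIndepFun Z μ)
    (hident : ∀ i, IdentDistrib (Z i) Z₀ μ μ) (hZ₀ : MemLp Z₀ 4 μ) (hmean : ∫ ω, Z₀ ω ∂μ = 0)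
    (s : Finset ι) :
    ∫ ω, ∑ i ∈ s, Z i ω ∂μ = 0 ∧
    ∫ ω, (∑ i ∈ s, Z i ω) ^ 2 ∂μ = #s * ∫ ω, Z₀ ω ^ 2 ∂μ ∧
    ∫ ω, (∑ i ∈ s, Z i ω) ^ 3 ∂μ = #s * ∫ ω, Z₀ ω ^ 3 ∂μ ∧
    ∫ ω, (∑ i ∈ s, Z i ω) ^ 4 ∂μ
      = #s * ∫ ω, Z₀ ω ^ 4 ∂μ + 3 * #s * (#s - 1) * (∫ ω, Z₀ ω ^ 2 ∂μ) ^ 2 := by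
  classical
  have hZ : ∀ i, MemLp (Z i) 4 μ := fun i => (hident i).symm.memLp_snd hZ₀
  have hmoment : ∀ i (k : ℕ), ∫ ω, Z i ω ^ k ∂μ = ∫ ω, Z₀ ω ^ k ∂μ :=
    fun i k => ((hident i).comp (measurable_id.pow_const k)).integral_eq
  induction s using Finset.induction_on with
  | empty => simp
  | @insert a s ha ih =>
    obtain ⟨ih1, ih2, ih3, ih4⟩ := ih
    have hind : (fun ω => ∑ i ∈ s, Z i ω) ⟂ᵢ[μ] Z a := by
      simpa only [Finset.sum_fn] using hindep.indepFun_finsetSum_of_notMem hmeas ha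
    have hS : MemLp (fun ω => ∑ i ∈ s, Z i ω) 4 μ := by
      simpa only [Finset.sum_fn] using memLp_finsetSum' s fun i _ => hZ i
    have hmom : ∀ n : ℕ, n ≤ 4 → ∫ ω, (∑ i ∈ insert a s, Z i ω) ^ n ∂μ = ∑ k ∈ range (n + 1),
        (∫ ω, (∑ i ∈ s, Z i ω) ^ k ∂μ) * (∫ ω, Z₀ ω ^ (n - k) ∂μ) * n.choose k := by
      intro n hn
      simp_rw [sum_insert ha, add_comm (Z a _), ← hmoment a]
      exact hind.integral_add_pow (hS.mono_exponent (by exact_mod_cast hn))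
        ((hZ a).mono_exponent (by exact_mod_cast hn))
    rw [card_insert_of_notMem ha]
    refine ⟨?_, ?_, ?_, ?_⟩
    · simpa [sum_range_succ, ih1, hmean] using hmom 1 (by norm_num)
    · simp [hmom 2 (by norm_num), sum_range_succ, ih1, ih2, hmean]
      ring
    · simp [hmom 3 (by norm_num), sum_range_succ, ih1, ih2, ih3, hmean]
      ring
    · simp [hmom 4 (by norm_num), sum_range_succ, ih1, ih2, ih4, hmean, Nat.choose_two_right]
      ring

theorem integrable_comp_add_const_mul_sum [IsProbabilityMeasure μ] {ι : Type*} {Z : ι → Ω → ℝ}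
    (hZ : ∀ i, MemLp (Z i) 4 μ) {f : ℝ → ℝ} (hf : ContDiff ℝ 4 f) {C : ℝ}
    (hC : ∀ x, |iteratedDeriv 4 f x| ≤ C) (x₀ c : ℝ) (s : Finset ι) :
    Integrable (fun ω => f (x₀ + c * ∑ i ∈ s, Z i ω)) μ := by
  refine integrable_comp_add_of_iteratedDeriv_le (n := 3) hf hC x₀ ?_
  simpa only [Finset.sum_fn, Nat.reduceAdd, Nat.cast_ofNat] using
    (memLp_finsetSum' s fun i _ => hZ i).const_mul c

theorem abs_integral_comp_add_sampleMean_sub_le [IsProbabilityMeasure μ] {ι : Type*}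
    {Z : ι → Ω → ℝ} {Z₀ : Ω → ℝ} (hmeas : ∀ i, Measurable (Z i)) (hindep : iIndepFun Z μ)
    (hident : ∀ i, IdentDistrib (Z i) Z₀ μ μ) (hZ₀ : MemLp Z₀ 4 μ) (hmean : ∫ ω, Z₀ ω ∂μ = 0)
    {f : ℝ → ℝ} (hf : ContDiff ℝ 4 f) {C : ℝ} (hC : ∀ x, |iteratedDeriv 4 f x| ≤ C)
    (s : Finset ι) (x₀ : ℝ) :
    |∫ ω, f (x₀ + (#s : ℝ)⁻¹ * ∑ i ∈ s, Z i ω) ∂μ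
        - (f x₀ + iteratedDeriv 2 f x₀ * (∫ ω, Z₀ ω ^ 2 ∂μ) / (2 * #s)
          + iteratedDeriv 3 f x₀ * (∫ ω, Z₀ ω ^ 3 ∂μ) / (6 * #s ^ 2))|
      ≤ C * (∫ ω, Z₀ ω ^ 4 ∂μ + 3 * (#s - 1) * (∫ ω, Z₀ ω ^ 2 ∂μ) ^ 2) / (24 * #s ^ 3) := by
  obtain ⟨hS₁, hS₂, hS₃, hS₄⟩ := integral_sum_pow_eq_of_iIndepFun hmeas hindep hident hZ₀ hmean s
  have hW : MemLp (fun ω => (#s : ℝ)⁻¹ * ∑ i ∈ s, Z i ω) (3 + 1 : ℕ) μ := by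
    have := (memLp_finsetSum' s fun i _ => (hident i).symm.memLp_snd hZ₀).const_mul (#s : ℝ)⁻¹
    simpa only [Finset.sum_fn, Nat.reduceAdd, Nat.cast_ofNat] using this
  have key := abs_integral_comp_add_sub_sum_le (n := 3) hf hC x₀ hW
  simp only [Nat.reduceAdd, sum_range_succ, sum_range_zero, pow_zero, pow_one, mul_pow,
    integral_const_mul, abs_mul, abs_inv, Nat.abs_cast, Even.pow_abs ⟨2, rfl⟩, hS₁, hS₂, hS₃, hS₄,
    integral_const, probReal_univ, smul_eq_mul, iteratedDeriv_zero] at key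
  norm_num [Nat.factorial] at key
  rcases s.eq_empty_or_nonempty with rfl | hne
  · simp
  have hs : (#s : ℝ) ≠ 0 := by simpa using hne.ne_empty
  refine (le_of_eq ?_).trans (key.trans_eq ?_)
  · congr 2
    field_simp
  · field_simp

theorem abs_two_mul_sub_half_add_sub_le {N y d₂ d₃ c₂ c₃ E E₀ E₁ R R₀ : ℝ} (hN : N ≠ 0)
    (hE : |E - (y + d₂ * c₂ / (2 * (2 * N)) + d₃ * c₃ / (6 * (2 * N) ^ 2))| ≤ R)
    (hE₀ : |E₀ - (y + d₂ * c₂ / (2 * N) + d₃ * c₃ / (6 * N ^ 2))| ≤ R₀)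
    (hE₁ : |E₁ - (y + d₂ * c₂ / (2 * N) + d₃ * c₃ / (6 * N ^ 2))| ≤ R₀) :
    |2 * E - (E₀ + E₁) / 2 - y| ≤ 2 * R + R₀ + |d₃ * c₃| / (12 * N ^ 2) := by
  have hdecomp : 2 * E - (E₀ + E₁) / 2 - y
      = 2 * (E - (y + d₂ * c₂ / (2 * (2 * N)) + d₃ * c₃ / (6 * (2 * N) ^ 2)))
        - (E₀ - (y + d₂ * c₂ / (2 * N) + d₃ * c₃ / (6 * N ^ 2))) / 2
        - (E₁ - (y + d₂ * c₂ / (2 * N) + d₃ * c₃ / (6 * N ^ 2))) / 2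
        - d₃ * c₃ / (12 * N ^ 2) := by
    field_simp
    ring
  have hd : |d₃ * c₃ / (12 * N ^ 2)| = |d₃ * c₃| / (12 * N ^ 2) := by
    rw [abs_div, abs_of_nonneg (by positivity : (0 : ℝ) ≤ 12 * N ^ 2)]
  have hd₁ := le_abs_self (d₃ * c₃ / (12 * N ^ 2))
  have hd₂ := neg_abs_le (d₃ * c₃ / (12 * N ^ 2))
  rw [hd] at hd₁ hd₂
  obtain ⟨hE', hE''⟩ := abs_le.1 hE
  obtain ⟨hE₀', hE₀''⟩ := abs_le.1 hE₀
  obtain ⟨hE₁', hE₁''⟩ := abs_le.1 hE₁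
  rw [hdecomp]
  exact abs_le.2 ⟨by linarith, by linarith⟩

theorem abs_integral_extrapolation_sub_le [IsProbabilityMeasure μ] {ι : Type*} [Fintype ι]
    [Nonempty ι] {Z : Fin 2 × ι → Ω → ℝ} {Z₀ : Ω → ℝ} (hmeas : ∀ p, Measurable (Z p))
    (hindep : iIndepFun Z μ) (hident : ∀ p, IdentDistrib (Z p) Z₀ μ μ) (hZ₀ : MemLp Z₀ 4 μ)
    (hmean : ∫ ω, Z₀ ω ∂μ = 0) {f : ℝ → ℝ} (hf : ContDiff ℝ 4 f) {C₃ C₄ x₀ : ℝ}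
    (hC₃ : |iteratedDeriv 3 f x₀| ≤ C₃) (hC₄ : ∀ x, |iteratedDeriv 4 f x| ≤ C₄) :
    |∫ ω, (2 * f (x₀ + (2 * (Fintype.card ι : ℝ))⁻¹ * ∑ p, Z p ω)
          - (f (x₀ + (Fintype.card ι : ℝ)⁻¹ * ∑ i, Z (0, i) ω)
            + f (x₀ + (Fintype.card ι : ℝ)⁻¹ * ∑ i, Z (1, i) ω)) / 2) ∂μ - f x₀|
      ≤ (4 * C₃ * |∫ ω, Z₀ ω ^ 3 ∂μ| + 9 * C₄ * (∫ ω, Z₀ ω ^ 2 ∂μ) ^ 2)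
          / (48 * (Fintype.card ι : ℝ) ^ 2)
        + 5 * C₄ / 96 * ((∫ ω, Z₀ ω ^ 4 ∂μ - 3 * (∫ ω, Z₀ ω ^ 2 ∂μ) ^ 2)
          / (Fintype.card ι : ℝ) ^ 3) := by
  have hN : (Fintype.card ι : ℝ) ≠ 0 := Nat.cast_ne_zero.2 Fintype.card_ne_zero
  have hZ : ∀ p, MemLp (Z p) 4 μ := fun p => (hident p).symm.memLp_snd hZ₀
  have hint : ∀ (κ : ℝ) (j : Fin 2),
      Integrable (fun ω => f (x₀ + κ * ∑ i, Z (j, i) ω)) μ := fun κ j =>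
    integrable_comp_add_const_mul_sum (fun i => hZ (j, i)) hf hC₄ x₀ κ univ
  have hT := abs_integral_comp_add_sampleMean_sub_le hmeas hindep hident hZ₀ hmean hf hC₄ univ x₀
  have hW := fun j : Fin 2 => abs_integral_comp_add_sampleMean_sub_le (fun i => hmeas (j, i))
    (hindep.precomp (Prod.mk_right_injective j)) (fun i => hident (j, i)) hZ₀ hmean hf hC₄ univ x₀
  simp only [card_univ, Fintype.card_prod, Fintype.card_fin, Nat.cast_mul, Nat.cast_ofNat] at hT hW
  have hintT : Integrable (fun ω => 2 * f (x₀ + (2 * (Fintype.card ι : ℝ))⁻¹ * ∑ p, Z p ω)) μ :=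
    (integrable_comp_add_const_mul_sum hZ hf hC₄ x₀ _ univ).const_mul 2
  have hintW : Integrable (fun ω => (f (x₀ + (Fintype.card ι : ℝ)⁻¹ * ∑ i, Z (0, i) ω)
      + f (x₀ + (Fintype.card ι : ℝ)⁻¹ * ∑ i, Z (1, i) ω)) / 2) μ :=
    ((hint _ 0).add (hint _ 1)).div_const 2
  rw [integral_sub hintT hintW, integral_const_mul, integral_div,
    integral_add (hint _ 0) (hint _ 1)]
  refine (abs_two_mul_sub_half_add_sub_le hN hT (hW 0) (hW 1)).trans ?_
  have hd : |iteratedDeriv 3 f x₀ * ∫ ω, Z₀ ω ^ 3 ∂μ| ≤ C₃ * |∫ ω, Z₀ ω ^ 3 ∂μ| := by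
    rw [abs_mul]
    exact mul_le_mul_of_nonneg_right hC₃ (abs_nonneg _)
  refine (add_le_add le_rfl (div_le_div_of_nonneg_right hd (by positivity))).trans_eq ?_
  field_simp
  ring

end

theorem stmt_3_general
    {Ω : Type*} [MeasurableSpace Ω] (μ : Measure Ω) [IsProbabilityMeasure μ]
    (m : ℕ) (hm : 0 < m)
    (q : ℝ → ℝ) (a3 a4 : ℝ)
    (hq : ContDiff ℝ 4 q)
    (ha3 : ∀ x : ℝ, |iteratedDeriv 3 q x| ≤ a3)
    (ha4 : ∀ x : ℝ, |iteratedDeriv 4 q x| ≤ a4)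
    (X : Fin 2 → Fin m → Ω → ℝ) (X0 : Ω → ℝ)
    (hmeas : ∀ j i, Measurable (X j i))
    (hindep : iIndepFun (fun p : Fin 2 × Fin m => X p.1 p.2) μ)
    (hident : ∀ j i, IdentDistrib (X j i) X0 μ μ)
    (hL4 : MemLp X0 4 μ)
    (h σ2 σ3 σ4 : ℝ)
    (hh : h = ∫ ω, X0 ω ∂μ)
    (hσ2 : σ2 = |∫ ω, (X0 ω - h) ^ 2 ∂μ|)
    (hσ3 : σ3 = |∫ ω, (X0 ω - h) ^ 3 ∂μ|)
    (hσ4 : σ4 = ∫ ω, (X0 ω - h) ^ 4 ∂μ)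
    -- the two sample averages `δ̄₁, δ̄₂`
    (A : Fin 2 → Ω → ℝ)
    (hA : ∀ j ω, A j ω = (m : ℝ)⁻¹ * ∑ i, X j i ω) :
    ∀ s : ℝ,
      |(∫ ω, (2 * q (s + (A 0 ω + A 1 ω) / 2) - (q (s + A 0 ω) + q (s + A 1 ω)) / 2) ∂μ)
          - q (s + h)|
        ≤ (4 * a3 * σ3 + 9 * a4 * σ2 ^ 2) / (48 * (m : ℝ) ^ 2)
          + (5 * a4 / 96) * ((σ4 - 3 * σ2 ^ 2) / (m : ℝ) ^ 3) := by
  intro s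
  have : NeZero m := ⟨hm.ne'⟩
  have hm' : (m : ℝ) ≠ 0 := by positivity
  have hmean : ∫ ω, (X0 ω - h) ∂μ = 0 := by
    rw [integral_sub (hL4.integrable (by norm_num)) (integrable_const h), hh]
    simp
  have hW : ∀ j ω, s + A j ω = s + h + (m : ℝ)⁻¹ * ∑ i, (X j i ω - h) := by
    intro j ω
    rw [hA, sum_sub_distrib, sum_const, card_univ, Fintype.card_fin, nsmul_eq_mul]
    field_simp
    ring
  have hT : ∀ ω, s + (A 0 ω + A 1 ω) / 2
      = s + h + (2 * (m : ℝ))⁻¹ * ∑ p : Fin 2 × Fin m, (X p.1 p.2 ω - h) := by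
    intro ω
    rw [hA, hA, Fintype.sum_prod_type, Fin.sum_univ_two, sum_sub_distrib, sum_sub_distrib,
      sum_const, card_univ, Fintype.card_fin, nsmul_eq_mul]
    field_simp
    ring
  have key := abs_integral_extrapolation_sub_le (Z := fun p ω => X p.1 p.2 ω - h)
    (fun p => (hmeas p.1 p.2).sub_const h)
    (hindep.comp _ fun _ => measurable_sub_const h)
    (fun p => (hident p.1 p.2).comp (measurable_sub_const h)) (hL4.sub (memLp_const h)) hmean
    hq (ha3 (s + h)) ha4
  simp only [Fintype.card_fin] at key
  simp_rw [hT, hW]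
  rw [hσ2, hσ3, hσ4, sq_abs]
  exact key

/-- **Second-order extrapolation guarantee** (Proposition `2nd_error`).
Let `q : ℝ → ℝ` be `C⁴` with `|q'''| ≤ a₃` and `|q⁗| ≤ a₄`.  Let `δ̄₁, δ̄₂` be
independent averages of `m` i.i.d. samples from a distribution with mean `h` and
central moments `σ₂, σ₃, σ₄`.  Then for every `s`,
`|E[2 q(s + (δ̄₁+δ̄₂)/2) - (q(s+δ̄₁)+q(s+δ̄₂))/2] - q(s+h)|
  ≤ (4a₃σ₃ + 9a₄σ₂²)/(48m²) + (5a₄/96)·(σ₄ - 3σ₂²)/m³`. -/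
theorem stmt_3
    {Ω : Type*} [MeasurableSpace Ω] (μ : Measure Ω) [IsProbabilityMeasure μ]
    (m : ℕ) (hm : 0 < m)
    (q : ℝ → ℝ) (a3 a4 : ℝ)
    (hq : ContDiff ℝ 4 q)
    (ha3 : ∀ x : ℝ, |iteratedDeriv 3 q x| ≤ a3)
    (ha4 : ∀ x : ℝ, |iteratedDeriv 4 q x| ≤ a4)
    (X : Fin 2 → Fin m → Ω → ℝ) (X0 : Ω → ℝ)
    (hmeas : ∀ j i, Measurable (X j i)) (hmeas0 : Measurable X0)
    (hindep : iIndepFun (fun p : Fin 2 × Fin m => X p.1 p.2) μ)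
    (hident : ∀ j i, IdentDistrib (X j i) X0 μ μ)
    (hL4 : MemLp X0 4 μ)
    (h σ2 σ3 σ4 : ℝ)
    (hh : h = ∫ ω, X0 ω ∂μ)
    (hσ2 : σ2 = |∫ ω, (X0 ω - h) ^ 2 ∂μ|)
    (hσ3 : σ3 = |∫ ω, (X0 ω - h) ^ 3 ∂μ|)
    (hσ4 : σ4 = ∫ ω, (X0 ω - h) ^ 4 ∂μ)
    -- the two sample averages `δ̄₁, δ̄₂`
    (A : Fin 2 → Ω → ℝ)
    (hA : ∀ j ω, A j ω = (m : ℝ)⁻¹ * ∑ i, X j i ω) :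
    ∀ s : ℝ,
      |(∫ ω, (2 * q (s + (A 0 ω + A 1 ω) / 2) - (q (s + A 0 ω) + q (s + A 1 ω)) / 2) ∂μ)
          - q (s + h)|
        ≤ (4 * a3 * σ3 + 9 * a4 * σ2 ^ 2) / (48 * (m : ℝ) ^ 2)
          + (5 * a4 / 96) * ((σ4 - 3 * σ2 ^ 2) / (m : ℝ) ^ 3) :=
  stmt_3_general μ m hm q a3 a4 hq ha3 ha4 X X0 hmeas hindep hident hL4 h σ2 σ3 σ4 hh hσ2 hσ3 hσ4 A
    hA
end

section
/- Let q : ℝ^p → ℝ^ℓ be four times continuously differentiable and let D be a distribution on ℝ^p, with D_{m'} denoting the distribution of the average of m' i.i.d. samples from D. Suppose there exist V, C ≥ 0 such that for m' ∈ {m, 2m} and δ̄ ~ D_{m'}, E[‖q(s + δ̄) − E[q(s + δ̄)]‖_2^2] ≤ V^2/m' + C. Then for δ̄_1, δ̄_2 independent ~ D_m and L^{(2)}_{D_m} q(s) = 2 q(s + (δ̄_1 + δ̄_2)/2) − (q(s + δ̄_1) + q(s + δ̄_2))/2, one has E[‖L^{(2)}_{D_m} q(s) − E[L^{(2)}_{D_m}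 q(s)]‖_2^2] ≤ 14 (V^2/m + C). -/
/-!
The variance of `L = 2 g - (h₀ + h₁)/2` is controlled by the variances of its three terms:
after centring, `‖2 a - (b + c)/2‖ ≤ 2‖a‖ + ‖b‖/2 + ‖c‖/2`, and `(u + v + w)² ≤ 3 (u² + v² + w²)`
turns this into `12 ‖a‖² + 3/4 ‖b‖² + 3/4 ‖c‖²`. Integrating and inserting the variance bounds at
batch sizes `2m` (for `g`) and `m` (for `h₀, h₁`) gives `15/2 · V²/m + 27/2 · C ≤ 14 (V²/m + C)`.
-/

open MeasureTheory ProbabilityTheory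

lemma sq_norm_two_smul_sub_half_smul_add_le {E : Type*} [SeminormedAddCommGroup E]
    [NormedSpace ℝ E] (a b c : E) :
    ‖(2 : ℝ) • a - (2 : ℝ)⁻¹ • (b + c)‖ ^ 2
      ≤ 12 * ‖a‖ ^ 2 + 3 / 4 * ‖b‖ ^ 2 + 3 / 4 * ‖c‖ ^ 2 := by
  have triangle : ‖(2 : ℝ) • a - (2 : ℝ)⁻¹ • (b + c)‖ ≤ 2 * ‖a‖ + 2⁻¹ * ‖b‖ + 2⁻¹ * ‖c‖ :=
    calc ‖(2 : ℝ) • a - (2 : ℝ)⁻¹ • (b + c)‖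
        ≤ ‖(2 : ℝ) • a‖ + ‖(2 : ℝ)⁻¹ • (b + c)‖ := norm_sub_le _ _
      _ ≤ 2 * ‖a‖ + 2⁻¹ * (‖b‖ + ‖c‖) := by
          rw [norm_smul, norm_smul, Real.norm_ofNat, norm_inv, Real.norm_ofNat]
          gcongr
          exact norm_add_le b c
      _ = 2 * ‖a‖ + 2⁻¹ * ‖b‖ + 2⁻¹ * ‖c‖ := by ring
  nlinarith [pow_le_pow_left₀ (norm_nonneg _) triangle 2, sq_nonneg (2 * ‖a‖ - 2⁻¹ * ‖b‖),
    sq_nonneg (2 * ‖a‖ - 2⁻¹ * ‖c‖), sq_nonneg (2⁻¹ * ‖b‖ - 2⁻¹ * ‖c‖)]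

section Extrapolation

variable {Ω E : Type*} [MeasurableSpace Ω] {μ : Measure Ω} [IsFiniteMeasure μ]
  [NormedAddCommGroup E] [NormedSpace ℝ E]

lemma MeasureTheory.MemLp.integrable_sq_norm_sub_integral {f : Ω → E} (hf : MemLp f 2 μ) :
    Integrable (fun ω => ‖f ω - ∫ ω', f ω' ∂μ‖ ^ 2) μ :=
  have hcentred := hf.sub (memLp_const (∫ ω', f ω' ∂μ))
  (memLp_two_iff_integrable_sq_norm hcentred.aestronglyMeasurable).mp hcentred

lemma integral_sq_norm_extrapolation_sub_integral_le {g h₀ h₁ : Ω → E}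
    (hg : MemLp g 2 μ) (hh₀ : MemLp h₀ 2 μ) (hh₁ : MemLp h₁ 2 μ) :
    ∫ ω, ‖((2 : ℝ) • g ω - (2 : ℝ)⁻¹ • (h₀ ω + h₁ ω))
        - ∫ ω', ((2 : ℝ) • g ω' - (2 : ℝ)⁻¹ • (h₀ ω' + h₁ ω')) ∂μ‖ ^ 2 ∂μ
      ≤ 12 * ∫ ω, ‖g ω - ∫ ω', g ω' ∂μ‖ ^ 2 ∂μ
        + 3 / 4 * ∫ ω, ‖h₀ ω - ∫ ω', h₀ ω' ∂μ‖ ^ 2 ∂μ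
        + 3 / 4 * ∫ ω, ‖h₁ ω - ∫ ω', h₁ ω' ∂μ‖ ^ 2 ∂μ := by
  have ig := hg.integrable one_le_two
  have ih₀ := hh₀.integrable one_le_two
  have ih₁ := hh₁.integrable one_le_two
  have centre : ∀ ω, ((2 : ℝ) • g ω - (2 : ℝ)⁻¹ • (h₀ ω + h₁ ω))
      - ∫ ω', ((2 : ℝ) • g ω' - (2 : ℝ)⁻¹ • (h₀ ω' + h₁ ω')) ∂μ
      = (2 : ℝ) • (g ω - ∫ ω', g ω' ∂μ)
        - (2 : ℝ)⁻¹ • ((h₀ ω - ∫ ω', h₀ ω' ∂μ) + (h₁ ω - ∫ ω', h₁ ω' ∂μ)) := by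
    intro ω
    rw [integral_sub (f := fun ω => (2 : ℝ) • g ω) (g := fun ω => (2 : ℝ)⁻¹ • (h₀ ω + h₁ ω))
      (ig.smul _) ((ih₀.add ih₁).smul _),
      integral_smul, integral_smul, integral_add ih₀ ih₁]
    module
  have vg := hg.integrable_sq_norm_sub_integral
  have vh₀ := hh₀.integrable_sq_norm_sub_integral
  have vh₁ := hh₁.integrable_sq_norm_sub_integral
  calc _ = ∫ ω, ‖(2 : ℝ) • (g ω - ∫ ω', g ω' ∂μ)
          - (2 : ℝ)⁻¹ • ((h₀ ω - ∫ ω', h₀ ω' ∂μ) + (h₁ ω - ∫ ω', h₁ ω' ∂μ))‖ ^ 2 ∂μ := by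
        simp_rw [centre]
    _ ≤ ∫ ω, (12 * ‖g ω - ∫ ω', g ω' ∂μ‖ ^ 2 + 3 / 4 * ‖h₀ ω - ∫ ω', h₀ ω' ∂μ‖ ^ 2
          + 3 / 4 * ‖h₁ ω - ∫ ω', h₁ ω' ∂μ‖ ^ 2) ∂μ := by
        refine integral_mono ?_ (((vg.const_mul _).add (vh₀.const_mul _)).add (vh₁.const_mul _))
          fun ω => sq_norm_two_smul_sub_half_smul_add_le _ _ _
        simp_rw [← centre]
        exact ((hg.const_smul _).sub ((hh₀.add hh₁).const_smul _)).integrable_sq_norm_sub_integral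
    _ = _ := by
        rw [integral_add (f := fun ω => 12 * ‖g ω - ∫ ω', g ω' ∂μ‖ ^ 2
            + 3 / 4 * ‖h₀ ω - ∫ ω', h₀ ω' ∂μ‖ ^ 2)
            ((vg.const_mul _).add (vh₀.const_mul _)) (vh₁.const_mul _),
          integral_add (vg.const_mul _) (vh₀.const_mul _), integral_const_mul,
          integral_const_mul, integral_const_mul]

end Extrapolation

theorem stmt_5_general
    (p l : ℕ)
    {Ω : Type*} [MeasurableSpace Ω] (μ : Measure Ω) [IsProbabilityMeasure μ]
    (m : ℕ)
    (q : EuclideanSpace ℝ (Fin p) → EuclideanSpace ℝ (Fin l))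
    (s : EuclideanSpace ℝ (Fin p)) (V C : ℝ) (hC : 0 ≤ C)
    -- the two sample averages `δ̄₁, δ̄₂ ~ D_m`
    (A : Fin 2 → Ω → EuclideanSpace ℝ (Fin p))
    -- square-integrability of the evaluations of `q`
    (hmem : ∀ j, MemLp (fun ω => q (s + A j ω)) 2 μ)
    (hmem2 : MemLp (fun ω => q (s + (2 : ℝ)⁻¹ • (A 0 ω + A 1 ω))) 2 μ)
    -- variance hypothesis at batch size `m` (i.e. `δ̄ ~ D_m`) …
    (hvar1 : ∀ j, ∫ ω, ‖q (s + A j ω) - ∫ ω', q (s + A j ω') ∂μ‖ ^ 2 ∂μ ≤ V ^ 2 / m + C)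
    -- … and at batch size `2m` (the average `(δ̄₁+δ̄₂)/2` is distributed as `D_{2m}`)
    (hvar2 : ∫ ω, ‖q (s + (2 : ℝ)⁻¹ • (A 0 ω + A 1 ω))
                    - ∫ ω', q (s + (2 : ℝ)⁻¹ • (A 0 ω' + A 1 ω')) ∂μ‖ ^ 2 ∂μ
              ≤ V ^ 2 / (2 * m) + C)
    -- the second-order extrapolation
    (L : Ω → EuclideanSpace ℝ (Fin l))
    (hL : ∀ ω, L ω = (2 : ℝ) • q (s + (2 : ℝ)⁻¹ • (A 0 ω + A 1 ω))
                      - (2 : ℝ)⁻¹ • (q (s + A 0 ω) + q (s + A 1 ω))) :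
    ∫ ω, ‖L ω - ∫ ω', L ω' ∂μ‖ ^ 2 ∂μ ≤ 14 * (V ^ 2 / m + C) := by
  rw [funext hL]
  have bound := integral_sq_norm_extrapolation_sub_integral_le hmem2 (hmem 0) (hmem 1)
  have halve : V ^ 2 / (2 * m) = V ^ 2 / m / 2 := by rw [mul_comm, div_div]
  have : 0 ≤ V ^ 2 / m := by positivity
  linarith [hvar1 0, hvar1 1]

/-- **Variance bound for the second-order extrapolation** (Lemma `extrapolation:variance`).
Let `q : ℝ^p → ℝ^ℓ` be `C⁴` and let `D_{m'}` denote the distribution of the average of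
`m'` i.i.d. samples from `D`.  If `E[‖q(s+δ̄) - E[q(s+δ̄)]‖²] ≤ V²/m' + C` for
`m' ∈ {m, 2m}` (with `δ̄ ~ D_{m'}`), then the second-order extrapolation
`L²_{D_m} q(s) = 2 q(s + (δ̄₁+δ̄₂)/2) - (q(s+δ̄₁)+q(s+δ̄₂))/2` (`δ̄₁, δ̄₂` independent
`~ D_m`) satisfies `E[‖L²_{D_m} q(s) - E[L²_{D_m} q(s)]‖²] ≤ 14 (V²/m + C)`. -/
theorem stmt_5
    (p l : ℕ)
    {Ω : Type*} [MeasurableSpace Ω] (μ : Measure Ω) [IsProbabilityMeasure μ]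
    (m : ℕ) (hm : 0 < m)
    (q : EuclideanSpace ℝ (Fin p) → EuclideanSpace ℝ (Fin l))
    (hq : ContDiff ℝ 4 q)
    (X : Fin 2 → Fin m → Ω → EuclideanSpace ℝ (Fin p))
    (X0 : Ω → EuclideanSpace ℝ (Fin p))
    (hmeas : ∀ j i, Measurable (X j i)) (hmeas0 : Measurable X0)
    (hindep : iIndepFun (fun r : Fin 2 × Fin m => X r.1 r.2) μ)
    (hident : ∀ j i, IdentDistrib (X j i) X0 μ μ)
    (s : EuclideanSpace ℝ (Fin p)) (V C : ℝ) (hV : 0 ≤ V) (hC : 0 ≤ C)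
    -- the two sample averages `δ̄₁, δ̄₂ ~ D_m`
    (A : Fin 2 → Ω → EuclideanSpace ℝ (Fin p))
    (hA : ∀ j ω, A j ω = (m : ℝ)⁻¹ • ∑ i, X j i ω)
    -- square-integrability of the evaluations of `q`
    (hmem : ∀ j, MemLp (fun ω => q (s + A j ω)) 2 μ)
    (hmem2 : MemLp (fun ω => q (s + (2 : ℝ)⁻¹ • (A 0 ω + A 1 ω))) 2 μ)
    -- variance hypothesis at batch size `m` (i.e. `δ̄ ~ D_m`) …
    (hvar1 : ∀ j, ∫ ω, ‖q (s + A j ω) - ∫ ω', q (s + A j ω') ∂μ‖ ^ 2 ∂μ ≤ V ^ 2 / m + C)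
    -- … and at batch size `2m` (the average `(δ̄₁+δ̄₂)/2` is distributed as `D_{2m}`)
    (hvar2 : ∫ ω, ‖q (s + (2 : ℝ)⁻¹ • (A 0 ω + A 1 ω))
                    - ∫ ω', q (s + (2 : ℝ)⁻¹ • (A 0 ω' + A 1 ω')) ∂μ‖ ^ 2 ∂μ
              ≤ V ^ 2 / (2 * m) + C)
    -- the second-order extrapolation
    (L : Ω → EuclideanSpace ℝ (Fin l))
    (hL : ∀ ω, L ω = (2 : ℝ) • q (s + (2 : ℝ)⁻¹ • (A 0 ω + A 1 ω))
                      - (2 : ℝ)⁻¹ • (q (s + A 0 ω) + q (s + A 1 ω))) :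
    ∫ ω, ‖L ω - ∫ ω', L ω' ∂μ‖ ^ 2 ∂μ ≤ 14 * (V ^ 2 / m + C) :=
  stmt_5_general p l μ m q s V C hC A hmem hmem2 hvar1 hvar2 L hL
end

section
/- Consider random iterates x^{t+1} = x^t − γ G^{t+1} in ℝ^d, t = 0, …, T−1, and a per-index staleness process over indices j ∈ {1, …, n} defined by φ_j^0 = x^0 and: at each time t ≥ 1, independently with probability p_out set φ_j^t = x^{t−1} for all j (large batch); otherwise a uniformly random subset of B_2 indices is selected and φ_j^t = x^{t−1} for each selected j while φ_j^t = φ_j^{t−1} for unselected j. Define Ξ^t := (1/n) Σ_{j=1}^n ‖x^t − φ_j^t‖_2^2 (so Ξ^0 = 0). Then (1/T) Σ_{t=0}^{T−1} E[Ξ^t] ≤ (6 n^2 / B_2^2) γ^2 (1/T) Σ_{t=0}^{T−1} E[‖G^{t+1}‖_2^2]. -/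
/-!
A uniformly random `B₂`-subset of `n` indices is exchangeable, so it contains a fixed index with
probability `q = B₂ / n`; hence each index is refreshed at every step with probability at least
`q`, independently of the past. Young's inequality with weight `q / 2` turns this into the
contraction `E‖x^{t+1} - φ_j^{t+1}‖² ≤ (1 - q/2) E‖x^t - φ_j^t‖² + (1 + 2/q) γ² E‖G^{t+1}‖²`, and
summing it over `t`, starting from `Ξ⁰ = 0`, bounds `∑ E[Ξ^t]` by
`(2/q) (1 + 2/q) γ² ∑ E‖G^{t+1}‖² ≤ (6/q²) γ² ∑ E‖G^{t+1}‖²`.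
-/

open MeasureTheory ProbabilityTheory Finset
open scoped ENNReal

section UniformSubset

variable {ι : Type*} [Fintype ι] {k : ℕ} {c : ℝ≥0∞} {P : Measure (ι → Bool)}

lemma map_comp_perm_eq_self_of_uniform
    (hP : ∀ v, P {v} = if #{i | v i = true} = k then c else 0) (σ : Equiv.Perm ι) :
    P.map (· ∘ σ) = P := by
  refine Measure.ext_of_singleton fun w => ?_
  have hpre : (· ∘ σ) ⁻¹' {w} = {w ∘ σ.symm} := by
    ext v
    simp only [Set.mem_preimage, Set.mem_singleton_iff]
    exact ⟨fun h => h ▸ by ext; simp, fun h => h ▸ by ext; simp⟩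
  rw [Measure.map_apply (measurable_of_countable _) (measurableSet_singleton w), hpre, hP, hP]
  congr 2
  exact card_equiv σ.symm (by simp)

lemma measure_coord_eq_true_congr_of_uniform [DecidableEq ι]
    (hP : ∀ v, P {v} = if #{i | v i = true} = k then c else 0) (i j : ι) :
    P {v | v i = true} = P {v | v j = true} := by
  conv_rhs => rw [← map_comp_perm_eq_self_of_uniform hP (Equiv.swap i j)]
  rw [Measure.map_apply (measurable_of_countable _) (.of_discrete)]
  simp

lemma sum_measure_coord_eq_true_of_uniform [DecidableEq ι] [IsProbabilityMeasure P]
    (hP : ∀ v, P {v} = if #{i | v i = true} = k then c else 0) :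
    ∑ i, P {v | v i = true} = k := by
  have hcount : ∀ v, #{i | v i = true} * P {v} = k * P {v} := by
    intro v
    by_cases hv : #{i | v i = true} = k
    · rw [hv]
    · rw [hP v, if_neg hv, mul_zero, mul_zero]
  calc ∑ i, P {v | v i = true}
      = ∑ i, ∑ v with v i = true, P {v} := by
        congr! with i; rw [sum_measure_singleton]; congr; ext; simp
    _ = ∑ v, #{i | v i = true} * P {v} := by
        simp_rw [sum_filter]
        rw [sum_comm]
        simp [← sum_filter, ← nsmul_eq_mul]
    _ = k := by
        simp_rw [hcount, ← mul_sum, sum_measure_singleton, coe_univ, measure_univ, mul_one]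

lemma measure_coord_eq_true_of_uniform [DecidableEq ι] [IsProbabilityMeasure P]
    (hP : ∀ v, P {v} = if #{i | v i = true} = k then c else 0) (j : ι) :
    P {v | v j = true} = k / Fintype.card ι := by
  have hcard : (Fintype.card ι : ℝ≥0∞) ≠ 0 := by
    have := Fintype.card_pos_iff.mpr ⟨j⟩
    positivity
  rw [ENNReal.eq_div_iff hcard (ENNReal.natCast_ne_top _),
    ← sum_measure_coord_eq_true_of_uniform hP]
  simp [measure_coord_eq_true_congr_of_uniform hP _ j]

lemma measureReal_coord_eq_false_of_uniform [DecidableEq ι] [IsProbabilityMeasure P]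
    (hP : ∀ v, P {v} = if #{i | v i = true} = k then c else 0) (j : ι) :
    P.real {v | v j = false} = 1 - k / Fintype.card ι := by
  have hcompl : {v : ι → Bool | v j = false} = {v | v j = true}ᶜ := by ext; simp
  rw [hcompl, probReal_compl_eq_one_sub .of_discrete, measureReal_def,
    measure_coord_eq_true_of_uniform hP, ENNReal.toReal_div]
  simp

lemma measureReal_eq_false_and_coord_eq_false_le [DecidableEq ι] {Ω : Type*}
    {mΩ : MeasurableSpace Ω} {μ : Measure Ω} {χ : Ω → Bool} {U : Ω → ι → Bool}
    (hmeas : Measurable fun ω => (χ ω, U ω)) {PB : Measure Bool} [IsProbabilityMeasure PB]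
    [IsProbabilityMeasure P] (hP : ∀ v, P {v} = if #{i | v i = true} = k then c else 0)
    (hlaw : μ.map (fun ω => (χ ω, U ω)) = PB.prod P) (j : ι) :
    μ.real {ω | χ ω = false ∧ U ω j = false} ≤ 1 - k / Fintype.card ι := by
  have hset : {ω | χ ω = false ∧ U ω j = false}
      = (fun ω => (χ ω, U ω)) ⁻¹' ({false} ×ˢ {v | v j = false}) := by ext; simp
  rw [hset, ← map_measureReal_apply hmeas .of_discrete, hlaw, measureReal_prod_prod,
    ← measureReal_coord_eq_false_of_uniform hP j]
  exact mul_le_of_le_one_left measureReal_nonneg measureReal_le_one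

end UniformSubset

lemma norm_sub_sq_le_one_add_mul {E : Type*} [SeminormedAddCommGroup E] (a b : E) {β : ℝ}
    (hβ : 0 < β) : ‖a - b‖ ^ 2 ≤ (1 + β) * ‖a‖ ^ 2 + (1 + β⁻¹) * ‖b‖ ^ 2 := by
  have hyoung : 2 * (‖a‖ * ‖b‖) ≤ β * ‖a‖ ^ 2 + β⁻¹ * ‖b‖ ^ 2 := by
    have h : 0 ≤ β⁻¹ * (β * ‖a‖ - ‖b‖) ^ 2 := by positivity
    have hinv : β⁻¹ * β = 1 := inv_mul_cancel₀ hβ.ne'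
    nlinarith
  nlinarith [norm_sub_le a b, norm_nonneg (a - b), norm_nonneg a, norm_nonneg b]

lemma integral_norm_sub_sq_piecewise_le {Ω E : Type*} {m m' mΩ : MeasurableSpace Ω}
    {μ : Measure Ω} [NormedAddCommGroup E] [NormedSpace ℝ E]
    (hm : m ≤ mΩ) (hm' : m' ≤ mΩ) (hindep : Indep m m' μ)
    {A : Set Ω} [DecidablePred (· ∈ A)] (hA : MeasurableSet[m] A) {x φ g : Ω → E}
    (hx : StronglyMeasurable[m'] x) (hφ : StronglyMeasurable[m'] φ)
    (hx2 : MemLp x 2 μ) (hφ2 : MemLp φ 2 μ) (hg2 : MemLp g 2 μ) (γ : ℝ) {β : ℝ} (hβ : 0 < β) :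
    ∫ ω, ‖(x ω - γ • g ω) - A.piecewise φ x ω‖ ^ 2 ∂μ
      ≤ (1 + β) * μ.real A * ∫ ω, ‖x ω - φ ω‖ ^ 2 ∂μ
        + (1 + β⁻¹) * γ ^ 2 * ∫ ω, ‖g ω‖ ^ 2 ∂μ := by
  set f : Ω → ℝ := fun ω => ‖x ω - φ ω‖ ^ 2
  have hfm : StronglyMeasurable[m'] f := ((hx.sub hφ).norm).pow 2
  have hfi : Integrable f μ := (hx2.sub hφ2).integrable_norm_pow two_ne_zero
  have hgi : Integrable (fun ω => ‖g ω‖ ^ 2) μ := hg2.integrable_norm_pow two_ne_zero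
  have hpt : ∀ ω, ‖(x ω - γ • g ω) - A.piecewise φ x ω‖ ^ 2
      ≤ (1 + β) * A.indicator f ω + (1 + β⁻¹) * γ ^ 2 * ‖g ω‖ ^ 2 := by
    intro ω
    have hγg : ‖γ • g ω‖ ^ 2 = γ ^ 2 * ‖g ω‖ ^ 2 := by
      rw [norm_smul, mul_pow, Real.norm_eq_abs, sq_abs]
    by_cases hω : ω ∈ A
    · rw [Set.piecewise_eq_of_mem _ _ _ hω, Set.indicator_of_mem hω, sub_right_comm, mul_assoc,
        ← hγg]
      exact norm_sub_sq_le_one_add_mul _ _ hβ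
    · rw [Set.piecewise_eq_of_notMem _ _ _ hω, Set.indicator_of_notMem hω, sub_sub_cancel_left,
        norm_neg, hγg, mul_zero, zero_add, mul_assoc]
      have : 0 ≤ β⁻¹ * (γ ^ 2 * ‖g ω‖ ^ 2) := by positivity
      linarith
  have hind : ∫ ω, A.indicator f ω ∂μ = μ.real A * ∫ ω, f ω ∂μ := by
    rw [integral_indicator (hm A hA)]
    exact (indep_of_indep_of_le_right hindep hfm.measurable.comap_le).setIntegral_eq_mul
      (f := id) hm (hfm.measurable.mono hm' le_rfl).aemeasurable hA
      measurable_id.aestronglyMeasurable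
  calc ∫ ω, ‖(x ω - γ • g ω) - A.piecewise φ x ω‖ ^ 2 ∂μ
      ≤ ∫ ω, ((1 + β) * A.indicator f ω + (1 + β⁻¹) * γ ^ 2 * ‖g ω‖ ^ 2) ∂μ :=
        integral_mono_of_nonneg (.of_forall fun _ => by positivity)
          (((hfi.indicator (hm A hA)).const_mul _).add (hgi.const_mul _)) (.of_forall hpt)
    _ = _ := by
        rw [integral_add ((hfi.indicator (hm A hA)).const_mul _) (hgi.const_mul _),
          integral_const_mul, integral_const_mul, hind]
        ring

lemma mul_sum_range_le_of_le_one_sub_mul_add {e g : ℕ → ℝ} {β : ℝ} (he0 : e 0 = 0)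
    (he : ∀ t, 0 ≤ e t) (hrec : ∀ t, e (t + 1) ≤ (1 - β) * e t + g t) (T : ℕ) :
    β * ∑ t ∈ range T, e t ≤ ∑ t ∈ range T, g t := by
  have hdrop : ∀ t, β * e t ≤ (e t - e (t + 1)) + g t := fun t => by linarith [hrec t]
  calc β * ∑ t ∈ range T, e t ≤ ∑ t ∈ range T, ((e t - e (t + 1)) + g t) := by
        rw [mul_sum]; exact sum_le_sum fun t _ => hdrop t
    _ = e 0 - e T + ∑ t ∈ range T, g t := by rw [sum_add_distrib, sum_range_sub']
    _ ≤ ∑ t ∈ range T, g t := by linarith [he T]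

lemma memLp_of_succ_eq_sub_smul {Ω E : Type*} {mΩ : MeasurableSpace Ω} {μ : Measure Ω}
    [NormedAddCommGroup E] [NormedSpace ℝ E] {p : ℝ≥0∞} {γ : ℝ} {x G : ℕ → Ω → E}
    (hxrec : ∀ t ω, x (t + 1) ω = x t ω - γ • G (t + 1) ω) (hx0 : MemLp (x 0) p μ)
    (hG : ∀ t, MemLp (G (t + 1)) p μ) (t : ℕ) : MemLp (x t) p μ := by
  induction t with
  | zero => exact hx0
  | succ t ih => rw [funext (hxrec t)]; exact ih.sub ((hG t).const_smul γ)

lemma memLp_of_succ_eq_piecewise {Ω E : Type*} {mΩ : MeasurableSpace Ω} {μ : Measure Ω}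
    [NormedAddCommGroup E] {p : ℝ≥0∞} {x φ : ℕ → Ω → E} {A : ℕ → Set Ω}
    [∀ t, DecidablePred (· ∈ A t)] (hA : ∀ t, MeasurableSet (A t)) (hφ0 : φ 0 = x 0)
    (hφrec : ∀ t, φ (t + 1) = (A t).piecewise (φ t) (x t)) (hx : ∀ t, MemLp (x t) p μ)
    (t : ℕ) : MemLp (φ t) p μ := by
  induction t with
  | zero => rw [hφ0]; exact hx 0
  | succ t ih => rw [hφrec]; exact (ih.restrict _).piecewise (hA t) ((hx t).restrict _)

lemma sum_integral_norm_sub_sq_piecewise_le {Ω E ι : Type*} [Fintype ι]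
    {m m' mΩ : MeasurableSpace Ω} {μ : Measure Ω} [NormedAddCommGroup E] [NormedSpace ℝ E]
    (hm : m ≤ mΩ) (hm' : m' ≤ mΩ) (hindep : Indep m m' μ)
    {A : ι → Set Ω} [∀ j, DecidablePred (· ∈ A j)] (hA : ∀ j, MeasurableSet[m] (A j))
    {q : ℝ} (hq : 0 < q) (hAμ : ∀ j, μ.real (A j) ≤ 1 - q) {x g : Ω → E} {φ : ι → Ω → E}
    (hx : StronglyMeasurable[m'] x) (hφ : ∀ j, StronglyMeasurable[m'] (φ j))
    (hx2 : MemLp x 2 μ) (hφ2 : ∀ j, MemLp (φ j) 2 μ) (hg2 : MemLp g 2 μ) (γ : ℝ) :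
    ∑ j, ∫ ω, ‖(x ω - γ • g ω) - (A j).piecewise (φ j) x ω‖ ^ 2 ∂μ
      ≤ (1 - q / 2) * ∑ j, ∫ ω, ‖x ω - φ j ω‖ ^ 2 ∂μ
        + Fintype.card ι * ((1 + 2 / q) * γ ^ 2 * ∫ ω, ‖g ω‖ ^ 2 ∂μ) := by
  have hcontract : ∀ j, (1 + q / 2) * μ.real (A j) ≤ 1 - q / 2 := fun j => by
    nlinarith [hAμ j]
  calc ∑ j, ∫ ω, ‖(x ω - γ • g ω) - (A j).piecewise (φ j) x ω‖ ^ 2 ∂μ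
      ≤ ∑ j, ((1 - q / 2) * ∫ ω, ‖x ω - φ j ω‖ ^ 2 ∂μ
          + (1 + 2 / q) * γ ^ 2 * ∫ ω, ‖g ω‖ ^ 2 ∂μ) := by
        refine sum_le_sum fun j _ => ?_
        have hstep := integral_norm_sub_sq_piecewise_le hm hm' hindep (hA j) hx (hφ j) hx2
          (hφ2 j) hg2 γ (half_pos hq)
        rw [inv_div] at hstep
        have hf : 0 ≤ ∫ ω, ‖x ω - φ j ω‖ ^ 2 ∂μ := integral_nonneg fun _ => by positivity
        nlinarith [mul_le_mul_of_nonneg_right (hcontract j) hf]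
    _ = _ := by rw [sum_add_distrib, ← mul_sum, sum_const, card_univ, nsmul_eq_mul]

/-- `A t j` is the event that index `j` is not refreshed at time `t + 1`, and `m t` is the
σ-algebra of the selection made at that time. -/
lemma sum_range_integral_staleness_le {Ω E ι : Type*} [Fintype ι] {mΩ : MeasurableSpace Ω}
    {μ : Measure Ω} [NormedAddCommGroup E] [NormedSpace ℝ E]
    {m ℱ : ℕ → MeasurableSpace Ω} (hm : ∀ t, m t ≤ mΩ) (hℱ : ∀ t, ℱ t ≤ mΩ)
    (hindep : ∀ t, Indep (m t) (ℱ t) μ)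
    {A : ℕ → ι → Set Ω} [∀ t j, DecidablePred (· ∈ A t j)]
    (hA : ∀ t j, MeasurableSet[m t] (A t j))
    {q : ℝ} (hq0 : 0 < q) (hq1 : q ≤ 1) (hAμ : ∀ t j, μ.real (A t j) ≤ 1 - q)
    {γ : ℝ} {x G : ℕ → Ω → E} {φ : ℕ → ι → Ω → E}
    (hxrec : ∀ t ω, x (t + 1) ω = x t ω - γ • G (t + 1) ω) (hφ0 : ∀ j, φ 0 j = x 0)
    (hφrec : ∀ t j, φ (t + 1) j = (A t j).piecewise (φ t j) (x t))
    (hx : ∀ t, StronglyMeasurable[ℱ t] (x t)) (hφ : ∀ t j, StronglyMeasurable[ℱ t] (φ t j))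
    (hx02 : MemLp (x 0) 2 μ) (hG2 : ∀ t, MemLp (G (t + 1)) 2 μ) (T : ℕ) :
    ∑ t ∈ range T, ∫ ω, (Fintype.card ι : ℝ)⁻¹ * ∑ j, ‖x t ω - φ t j ω‖ ^ 2 ∂μ
      ≤ 6 / q ^ 2 * γ ^ 2 * ∑ t ∈ range T, ∫ ω, ‖G (t + 1) ω‖ ^ 2 ∂μ := by
  have hx2 := memLp_of_succ_eq_sub_smul hxrec hx02 hG2
  have hφ2 : ∀ t j, MemLp (φ t j) 2 μ := fun t j =>
    memLp_of_succ_eq_piecewise (φ := fun t => φ t j) (fun t => hm t _ (hA t j)) (hφ0 j)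
      (fun t => hφrec t j) hx2 t
  set e : ℕ → ℝ := fun t => ∑ j, ∫ ω, ‖x t ω - φ t j ω‖ ^ 2 ∂μ
  set S := ∑ t ∈ range T, ∫ ω, ‖G (t + 1) ω‖ ^ 2 ∂μ
  have he0 : e 0 = 0 := by simp [e, hφ0]
  have he : ∀ t, 0 ≤ e t := fun t => sum_nonneg fun j _ => integral_nonneg fun _ => by positivity
  have hrec : ∀ t, e (t + 1) ≤ (1 - q / 2) * e t
      + Fintype.card ι * ((1 + 2 / q) * γ ^ 2 * ∫ ω, ‖G (t + 1) ω‖ ^ 2 ∂μ) := fun t => by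
    simpa only [e, hφrec, ← hxrec] using sum_integral_norm_sub_sq_piecewise_le (hm t) (hℱ t)
      (hindep t) (hA t) hq0 (hAμ t) (hx t) (hφ t) (hx2 t) (hφ2 t) (hG2 t) γ
  have hS : 0 ≤ S := sum_nonneg fun t _ => integral_nonneg fun _ => by positivity
  have htel := mul_sum_range_le_of_le_one_sub_mul_add he0 he hrec T
  rw [← mul_sum, ← mul_sum] at htel
  have hlhs : ∀ t, ∫ ω, (Fintype.card ι : ℝ)⁻¹ * ∑ j, ‖x t ω - φ t j ω‖ ^ 2 ∂μ
      = (Fintype.card ι : ℝ)⁻¹ * e t := fun t => by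
    rw [integral_const_mul, integral_finsetSum (f := fun j ω => ‖x t ω - φ t j ω‖ ^ 2) _
      fun j _ => ((hx2 t).sub (hφ2 t j)).integrable_norm_pow two_ne_zero]
  have hconst : 2 / q * (1 + 2 / q) ≤ 6 / q ^ 2 := by
    rw [div_mul_eq_mul_div, div_le_div_iff₀ hq0 (by positivity)]
    field_simp
    nlinarith
  calc ∑ t ∈ range T, ∫ ω, (Fintype.card ι : ℝ)⁻¹ * ∑ j, ‖x t ω - φ t j ω‖ ^ 2 ∂μ
      = (Fintype.card ι : ℝ)⁻¹ * (2 / q) * (q / 2 * ∑ t ∈ range T, e t) := by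
        simp only [hlhs, ← mul_sum]
        field_simp
    _ ≤ (Fintype.card ι : ℝ)⁻¹ * (2 / q) * (Fintype.card ι * ((1 + 2 / q) * γ ^ 2 * S)) :=
        mul_le_mul_of_nonneg_left htel (by positivity)
    _ = (Fintype.card ι : ℝ)⁻¹ * Fintype.card ι * (2 / q * (1 + 2 / q)) * γ ^ 2 * S := by ring
    _ ≤ 6 / q ^ 2 * γ ^ 2 * S := by
        gcongr
        exact (mul_le_of_le_one_left (by positivity) inv_mul_le_one).trans hconst

theorem stmt_16_general
    (d n B2 T : ℕ) (hB2 : 0 < B2) (hB2n : B2 ≤ n)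
    {Ω : Type*} {mΩ : MeasurableSpace Ω} (μ : Measure Ω)
    (ℱ : Filtration ℕ mΩ)
    (γ : ℝ)
    (x G : ℕ → Ω → EuclideanSpace ℝ (Fin d))
    (φ : ℕ → Fin n → Ω → EuclideanSpace ℝ (Fin d))
    (χ : ℕ → Ω → Bool) (U : ℕ → Ω → Fin n → Bool)
    -- the iteration and the staleness recursion
    (hxrec : ∀ t ω, x (t + 1) ω = x t ω - γ • G (t + 1) ω)
    (hφ0 : ∀ j ω, φ 0 j ω = x 0 ω)
    (hφrec : ∀ t j ω, φ (t + 1) j ω =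
      if χ (t + 1) ω = true then x t ω
      else if U (t + 1) ω j = true then x t ω else φ t j ω)
    -- adaptedness and square-integrability
    (hxad : ∀ t, Measurable[ℱ t] (x t))
    (hφad : ∀ t j, Measurable[ℱ t] (φ t j))
    (hselad : ∀ t, Measurable[ℱ (t + 1)] fun ω => (χ (t + 1) ω, U (t + 1) ω))
    (hG2 : ∀ t, MemLp (G (t + 1)) 2 μ) (hx02 : MemLp (x 0) 2 μ)
    -- the coin and subset at time `t+1` are independent of the past …
    (hindep : ∀ t, Indep
      (MeasurableSpace.comap (fun ω => (χ (t + 1) ω, U (t + 1) ω)) inferInstance)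
      (ℱ t) μ)
    -- … the coin is Bernoulli(p_out), independent of the subset, which is uniform
    -- over the subsets of cardinality `B₂`
    (PB : Measure Bool) (PU : Measure (Fin n → Bool))
    (hPB : IsProbabilityMeasure PB) (hPU : IsProbabilityMeasure PU)
    (hPUv : ∀ v : Fin n → Bool, PU {v}
      = if (univ.filter fun i => v i = true).card = B2
        then ((n.choose B2 : ENNReal))⁻¹ else 0)
    (hlaw : ∀ t, μ.map (fun ω => (χ (t + 1) ω, U (t + 1) ω)) = PB.prod PU) :
    (T : ℝ)⁻¹ * ∑ t ∈ Finset.range T,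
        ∫ ω, (n : ℝ)⁻¹ * ∑ j, ‖x t ω - φ t j ω‖ ^ 2 ∂μ
      ≤ (6 * (n : ℝ) ^ 2 / (B2 : ℝ) ^ 2) * γ ^ 2
          * ((T : ℝ)⁻¹ * ∑ t ∈ Finset.range T, ∫ ω, ‖G (t + 1) ω‖ ^ 2 ∂μ) := by
  have hpair : ∀ t, Measurable fun ω => (χ (t + 1) ω, U (t + 1) ω) :=
    fun t => (hselad t).mono (ℱ.le _) le_rfl
  have hφpiecewise : ∀ t j, φ (t + 1) j
      = {ω | χ (t + 1) ω = false ∧ U (t + 1) ω j = false}.piecewise (φ t j) (x t) := by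
    intro t j
    funext ω
    simp only [hφrec, Set.piecewise]
    split_ifs <;> simp_all
  have hq0 : (0 : ℝ) < B2 / n := by
    have : 0 < n := hB2.trans_le hB2n
    positivity
  have hq1 : (B2 : ℝ) / n ≤ 1 := div_le_one_of_le₀ (by exact_mod_cast hB2n) (by positivity)
  have hbound := sum_range_integral_staleness_le (fun t => (hpair t).comap_le) ℱ.le hindep
    (A := fun t j => {ω | χ (t + 1) ω = false ∧ U (t + 1) ω j = false})
    (fun t j => ⟨{p | p.1 = false ∧ p.2 j = false}, .of_discrete, rfl⟩) hq0 hq1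
    (fun t j => by
      simpa using measureReal_eq_false_and_coord_eq_false_le (hpair t) hPUv (hlaw t) j)
    hxrec (fun j => funext (hφ0 j)) hφpiecewise (fun t => (hxad t).stronglyMeasurable)
    (fun t j => (hφad t j).stronglyMeasurable) hx02 hG2 T
  rw [Fintype.card_fin, div_pow, div_div_eq_mul_div] at hbound
  calc (T : ℝ)⁻¹ * ∑ t ∈ Finset.range T, ∫ ω, (n : ℝ)⁻¹ * ∑ j, ‖x t ω - φ t j ω‖ ^ 2 ∂μ
      ≤ (T : ℝ)⁻¹ * (6 * n ^ 2 / B2 ^ 2 * γ ^ 2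
          * ∑ t ∈ Finset.range T, ∫ ω, ‖G (t + 1) ω‖ ^ 2 ∂μ) := by gcongr
    _ = _ := by ring

/-- **Average staleness bound** (Lemma `staleness`).
Consider iterates `x^{t+1} = x^t - γ G^{t+1}` in `ℝ^d` and the per-index staleness
process: `φ_j^0 = x^0`, and at each time `t ≥ 1`, independently of the past, with
probability `p_out` set `φ_j^t = x^{t-1}` for all `j` (large batch); otherwise a
uniformly random subset of `B₂` of the `n` indices (indicator vector `U^t`) is
selected and `φ_j^t = x^{t-1}` for selected `j`, `φ_j^t = φ_j^{t-1}` otherwise.  With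
`Ξ^t = (1/n) ∑_j ‖x^t - φ_j^t‖²`,
`(1/T) ∑_{t<T} E[Ξ^t] ≤ (6n²/B₂²) γ² (1/T) ∑_{t<T} E[‖G^{t+1}‖²]`. -/
theorem stmt_16
    (d n B2 T : ℕ) (hn : 0 < n) (hB2 : 0 < B2) (hB2n : B2 ≤ n) (hT : 0 < T)
    {Ω : Type*} {mΩ : MeasurableSpace Ω} (μ : Measure Ω) [IsProbabilityMeasure μ]
    (ℱ : Filtration ℕ mΩ)
    (γ pout : ℝ) (hγ : 0 < γ) (hpout0 : 0 ≤ pout) (hpout1 : pout ≤ 1)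
    (x G : ℕ → Ω → EuclideanSpace ℝ (Fin d))
    (φ : ℕ → Fin n → Ω → EuclideanSpace ℝ (Fin d))
    (χ : ℕ → Ω → Bool) (U : ℕ → Ω → Fin n → Bool)
    -- the iteration and the staleness recursion
    (hxrec : ∀ t ω, x (t + 1) ω = x t ω - γ • G (t + 1) ω)
    (hφ0 : ∀ j ω, φ 0 j ω = x 0 ω)
    (hφrec : ∀ t j ω, φ (t + 1) j ω =
      if χ (t + 1) ω = true then x t ω
      else if U (t + 1) ω j = true then x t ω else φ t j ω)
    -- adaptedness and square-integrability
    (hxad : ∀ t, Measurable[ℱ t] (x t))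
    (hGad : ∀ t, Measurable[ℱ (t + 1)] (G (t + 1)))
    (hφad : ∀ t j, Measurable[ℱ t] (φ t j))
    (hselad : ∀ t, Measurable[ℱ (t + 1)] fun ω => (χ (t + 1) ω, U (t + 1) ω))
    (hG2 : ∀ t, MemLp (G (t + 1)) 2 μ) (hx02 : MemLp (x 0) 2 μ)
    -- the coin and subset at time `t+1` are independent of the past …
    (hindep : ∀ t, Indep
      (MeasurableSpace.comap (fun ω => (χ (t + 1) ω, U (t + 1) ω)) inferInstance)
      (ℱ t) μ)
    -- … the coin is Bernoulli(p_out), independent of the subset, which is uniform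
    -- over the subsets of cardinality `B₂`
    (PB : Measure Bool) (PU : Measure (Fin n → Bool))
    (hPB : IsProbabilityMeasure PB) (hPU : IsProbabilityMeasure PU)
    (hPBt : PB {true} = ENNReal.ofReal pout)
    (hPUv : ∀ v : Fin n → Bool, PU {v}
      = if (univ.filter fun i => v i = true).card = B2
        then ((n.choose B2 : ENNReal))⁻¹ else 0)
    (hlaw : ∀ t, μ.map (fun ω => (χ (t + 1) ω, U (t + 1) ω)) = PB.prod PU) :
    (T : ℝ)⁻¹ * ∑ t ∈ Finset.range T,
        ∫ ω, (n : ℝ)⁻¹ * ∑ j, ‖x t ω - φ t j ω‖ ^ 2 ∂μ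
      ≤ (6 * (n : ℝ) ^ 2 / (B2 : ℝ) ^ 2) * γ ^ 2
          * ((T : ℝ)⁻¹ * ∑ t ∈ Finset.range T, ∫ ω, ‖G (t + 1) ω‖ ^ 2 ∂μ) :=
  stmt_16_general d n B2 T hB2 hB2n μ ℱ γ x G φ χ U hxrec hφ0 hφrec hxad hφad hselad hG2 hx02 hindep
    PB PU hPB hPU hPUv hlaw
end
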